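/- Let K₁ and K₂ be sets of propositional formulas over a set of atoms At, and let i₁, i₂ be two-valued interpretations with i₁ ⊨ K₁ and i₂ ⊨ K₂. Define the three-valued interpretation f(i₁, i₂) by f(i₁, i₂)(a) = i₁(a) if i₁(a) = i₂(a), and f(i₁, i₂)(a) = both otherwise. Then f(i₁, i₂) is a three-valued model of K₁ ∪ K₂, i.e., f(i₁, i₂) ⊨³ φ for every φ ∈ K₁ ∪ K₂. -/
import Mathlib


inductive PropForm (At : Type) : Type where
  | atom : At → PropForm At
  | conj : PropForm At → PropForm At → PropForm At
  | disj : PropForm At → PropForm At → PropForm At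
  | neg  : PropForm At → PropForm At
deriving DecidableEq

inductive Three : Type where
  | zero : Three
  | both : Three
  | one  : Three
deriving DecidableEq

def Three.toNat : Three → ℕ
  | .zero => 0
  | .both => 1
  | .one  => 2

/-- Minimum w.r.t. the truth order 0 ≺ both ≺ 1. -/
def Three.tmin (a b : Three) : Three := if a.toNat ≤ b.toNat then a else b

/-- Maximum w.r.t. the truth order 0 ≺ both ≺ 1. -/
def Three.tmax (a b : Three) : Three := if a.toNat ≤ b.toNat then b else a

def Three.tneg : Three → Three
  | .zero => .one
  | .both => .both
  | .one  => .zero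

/-- Three-valued evaluation of a formula. -/
def evalThree {At : Type} (ν : At → Three) : PropForm At → Three
  | .atom a => ν a
  | .conj α β => Three.tmin (evalThree ν α) (evalThree ν β)
  | .disj α β => Three.tmax (evalThree ν α) (evalThree ν β)
  | .neg α => Three.tneg (evalThree ν α)

/-- Three-valued satisfaction: ν ⊨³ φ iff ν(φ) = 1 or ν(φ) = both. -/
def satThree {At : Type} (ν : At → Three) (φ : PropForm At) : Prop :=
  evalThree ν φ = Three.one ∨ evalThree ν φ = Three.both

/-- Two-valued evaluation of a formula. -/
def evalTwo {At : Type} (ω : At → Bool) : PropForm At → Bool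
  | .atom a => ω a
  | .conj α β => evalTwo ω α && evalTwo ω β
  | .disj α β => evalTwo ω α || evalTwo ω β
  | .neg α => ! evalTwo ω α

/-- Two-valued satisfaction. -/
def satTwo {At : Type} (ω : At → Bool) (φ : PropForm At) : Prop :=
  evalTwo ω φ = true

/-- View a two-valued truth value as a three-valued one. -/
def Bool.toThree : Bool → Three
  | false => Three.zero
  | true  => Three.one

lemma approx_lemma {At : Type} (ν : At → Three) (i : At → Bool)
    (h : ∀ a, ν a = Three.both ∨ ν a = (i a).toThree) (φ : PropForm At) :
    evalThree ν φ = Three.both ∨ evalThree ν φ = (evalTwo i φ).toThree := by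
  induction φ with
  | atom a => exact h a
  | conj α β ihα ihβ =>
      simp only [evalThree, evalTwo]
      rcases ihα with hα | hα <;> rcases ihβ with hβ | hβ <;> rw [hα, hβ] <;>
        cases evalTwo i α <;> cases evalTwo i β <;> simp [Bool.toThree, Three.tmin, Three.toNat]
  | disj α β ihα ihβ =>
      simp only [evalThree, evalTwo]
      rcases ihα with hα | hα <;> rcases ihβ with hβ | hβ <;> rw [hα, hβ] <;>
        cases evalTwo i α <;> cases evalTwo i β <;> simp [Bool.toThree, Three.tmax, Three.toNat]
  | neg α ihα =>
      simp only [evalThree, evalTwo]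
      rcases ihα with hα | hα <;> rw [hα] <;>
        cases evalTwo i α <;> simp [Bool.toThree, Three.tneg]

/-- If `i₁ ⊨ K₁` and `i₂ ⊨ K₂`, then the three-valued interpretation `f(i₁,i₂)`
(agreeing assignments kept, disagreeing ones set to `both`) is a three-valued model
of `K₁ ∪ K₂`. -/
theorem stmt2 {At : Type} (K₁ K₂ : Set (PropForm At)) (i₁ i₂ : At → Bool)
    (h₁ : ∀ φ ∈ K₁, satTwo i₁ φ) (h₂ : ∀ φ ∈ K₂, satTwo i₂ φ) :
    ∀ φ ∈ K₁ ∪ K₂,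
      satThree (fun a => if i₁ a = i₂ a then Bool.toThree (i₁ a) else Three.both) φ := by
  intro φ hφ
  unfold satThree
  set ν := fun a => if i₁ a = i₂ a then Bool.toThree (i₁ a) else Three.both with hν
  have happ : ∀ (i : At → Bool), (∀ a, ν a = Three.both ∨ ν a = (i a).toThree) →
      evalTwo i φ = true → satThree ν φ := by
    intro i hi ht
    rcases approx_lemma ν i hi φ with h | h
    · exact Or.inr h
    · left; rw [h, ht]; rfl
  rcases hφ with h | h
  · exact happ i₁ (fun a => by by_cases he : i₁ a = i₂ a <;> simp [hν, he]) (h₁ φ h)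
  · exact happ i₂ (fun a => by by_cases he : i₁ a = i₂ a <;> simp [hν, he]) (h₂ φ h)
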